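/- In a finite graph G in which a vertex v dominates a vertex u (N[v] ⊇ N[u], u ≠ v), the cop wins G if and only if the cop wins G - u. -/

import Mathlib

/-- The closed neighbourhood `N[v]` of a vertex. -/
def closedNbhd {V : Type*} (G : SimpleGraph V) (v : V) : Set V :=
  insert v {u | G.Adj v u}

/-- `v` dominates `u`: `N[v] ⊇ N[u]`. -/
def Dominates {V : Type*} (G : SimpleGraph V) (v u : V) : Prop :=
  closedNbhd G u ⊆ closedNbhd G v

/-- `v` dominates `u` in the subgraph induced on `S`. -/
def DominatesOn {V : Type*} (G : SimpleGraph V) (S : Set V) (v u : V) : Prop :=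
  ∀ w ∈ S, w ∈ closedNbhd G u → w ∈ closedNbhd G v

/-- A (finite) graph is dismantlable: its vertices can be ordered `v_1, …, v_n` so that
for each `i < n` some later `v_j` dominates `v_i` in the subgraph induced on
`{v_i, …, v_n}`. -/
def Dismantlable {V : Type*} (G : SimpleGraph V) : Prop :=
  ∃ (n : ℕ) (e : Fin n ≃ V), ∀ i : Fin n, (i : ℕ) + 1 < n →
    ∃ j : Fin n, i < j ∧
      DominatesOn G {w | ∃ k : Fin n, i ≤ k ∧ e k = w} (e j) (e i)

/-- A full-information cop strategy: an initial vertex, and a move function taking the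
current cop and robber positions to a new cop position, which must be the current one or
an adjacent one. -/
structure CopStrategy {V : Type*} (G : SimpleGraph V) where
  init : V
  move : V → V → V
  valid : ∀ c r, move c r = c ∨ G.Adj c (move c r)

/-- A full-information robber strategy: an initial vertex chosen knowing the cop's start,
and a move function taking the cop's (just updated) position and the robber's position to
a new robber position, which must be the current one or an adjacent one. -/
structure RobberStrategy {V : Type*} (G : SimpleGraph V) where
  init : V → V
  move : V → V → V
  valid : ∀ c r, move c r = r ∨ G.Adj r (move c r)

/-- The pair of (cop, robber) positions after `k` full rounds of play: the cop moves
first in each round, then the robber responds. -/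
def play {V : Type*} (G : SimpleGraph V) (cs : CopStrategy G) (rs : RobberStrategy G) :
    ℕ → V × V
  | 0 => (cs.init, rs.init cs.init)
  | k + 1 =>
      let p := play G cs rs k
      let c' := cs.move p.1 p.2
      (c', rs.move c' p.2)

/-- The cop wins: there is a cop strategy such that against every robber strategy, at some
round the cop's move lands on the robber's current vertex. -/
def CopWin {V : Type*} (G : SimpleGraph V) : Prop :=
  ∃ cs : CopStrategy G, ∀ rs : RobberStrategy G,
    ∃ k : ℕ, (play G cs rs (k + 1)).1 = (play G cs rs k).2
/-!
Index the cop's winning positions by the number of moves he needs (`CopWinsWithin`). On a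
finite graph the cop wins iff some start of his wins in bounded time against every robber
start: the cop wins by always moving so as to shorten the remaining time, and from a position
lost in every bounded time the robber, by finiteness, always has a reply that keeps it so.

Folding `u` onto `v` retracts `G` onto `G - u` and sends every vertex to one whose closed
neighbourhood contains its own. Such a retraction is a homomorphism of reflexive graphs, so it
turns winning positions of `G` into winning positions of `G - u`. Conversely, the cop plays his
strategy for `G - u` against the image of the robber: a robber at `w` is caught at most one
move after a robber at the image of `w`, so each round in `G - u` costs at most two in `G`.
-/

section CopsAndRobbers

variable {V : Type*} {G : SimpleGraph V}

lemma mem_closedNbhd {x w : V} : w ∈ closedNbhd G x ↔ w = x ∨ G.Adj x w := Iff.rfl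

lemma self_mem_closedNbhd (x : V) : x ∈ closedNbhd G x := mem_closedNbhd.2 (Or.inl rfl)

lemma mem_closedNbhd_comm {x w : V} : w ∈ closedNbhd G x ↔ x ∈ closedNbhd G w := by
  simp only [mem_closedNbhd, eq_comm, G.adj_comm]

lemma mem_closedNbhd_induce {S : Set V} {a b : S} :
    b ∈ closedNbhd (G.induce S) a ↔ (b : V) ∈ closedNbhd G a := by
  simp [mem_closedNbhd, Subtype.ext_iff]

lemma CopStrategy.move_mem (cs : CopStrategy G) (c r : V) : cs.move c r ∈ closedNbhd G c :=
  mem_closedNbhd.2 (cs.valid c r)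

lemma RobberStrategy.move_mem (rs : RobberStrategy G) (c r : V) :
    rs.move c r ∈ closedNbhd G r :=
  mem_closedNbhd.2 (rs.valid c r)

/-- With the cop at `c` to move and the robber at `r`, the cop can force a capture within `n`
of his moves. -/
def CopWinsWithin (G : SimpleGraph V) : ℕ → V → V → Prop
  | 0, _, _ => False
  | n + 1, c, r =>
    ∃ c' ∈ closedNbhd G c, c' = r ∨ ∀ r' ∈ closedNbhd G r, CopWinsWithin G n c' r'

lemma copWinsWithin_succ {n : ℕ} {c r : V} :
    CopWinsWithin G (n + 1) c r ↔
      ∃ c' ∈ closedNbhd G c, c' = r ∨ ∀ r' ∈ closedNbhd G r, CopWinsWithin G n c' r' :=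
  Iff.rfl

namespace CopWinsWithin

lemma mono_succ : ∀ {n : ℕ} {c r : V}, CopWinsWithin G n c r → CopWinsWithin G (n + 1) c r
  | 0, _, _, h => h.elim
  | _ + 1, _, _, ⟨c', hc', h⟩ =>
    ⟨c', hc', h.imp_right fun hall r' hr' => mono_succ (hall r' hr')⟩

lemma mono {m n : ℕ} (hmn : m ≤ n) {c r : V} (h : CopWinsWithin G m c r) :
    CopWinsWithin G n c r := by
  induction n, hmn using Nat.le_induction with
  | base => exact h
  | succ n _ ih => exact ih.mono_succ

lemma of_mem {n : ℕ} {c r : V} (h : r ∈ closedNbhd G c) : CopWinsWithin G (n + 1) c r :=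
  ⟨r, h, Or.inl rfl⟩

/-- The cop plays as against `s`; if that move lands on `s`, the robber is now adjacent to
him. -/
lemma of_closedNbhd_subset {n : ℕ} {c r s : V} (hrs : closedNbhd G r ⊆ closedNbhd G s)
    (h : CopWinsWithin G n c s) : CopWinsWithin G (n + 1) c r := by
  cases n with
  | zero => exact h.elim
  | succ n =>
    obtain ⟨c', hc', hcap | hall⟩ := h
    · subst hcap
      exact ⟨c', hc', Or.inr fun r' hr' => of_mem (hrs hr')⟩
    · exact ⟨c', hc', Or.inr fun r' hr' => (hall r' (hrs hr')).mono_succ⟩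

end CopWinsWithin

section Strategies

variable (G)

open Classical in
noncomputable def greedyMove (c r : V) : V :=
  if h : ∃ n, CopWinsWithin G (n + 1) c r then (copWinsWithin_succ.1 (Nat.find_spec h)).choose
  else c

open Classical in
lemma greedyMove_mem (c r : V) : greedyMove G c r ∈ closedNbhd G c := by
  unfold greedyMove
  split_ifs with h
  · exact (copWinsWithin_succ.1 (Nat.find_spec h)).choose_spec.1
  · exact self_mem_closedNbhd c

open Classical in
lemma greedyMove_spec {n : ℕ} {c r : V} (hn : CopWinsWithin G (n + 1) c r) :
    greedyMove G c r = r ∨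
      ∀ r' ∈ closedNbhd G r, CopWinsWithin G n (greedyMove G c r) r' := by
  have h : ∃ n, CopWinsWithin G (n + 1) c r := ⟨n, hn⟩
  have hle : Nat.find h ≤ n := Nat.find_min' h hn
  rw [greedyMove, dif_pos h]
  exact (copWinsWithin_succ.1 (Nat.find_spec h)).choose_spec.2.imp_right
    fun hall r' hr' => (hall r' hr').mono hle

noncomputable def greedyCop (c₀ : V) : CopStrategy G :=
  ⟨c₀, greedyMove G, fun c r => mem_closedNbhd.1 (greedyMove_mem G c r)⟩

lemma greedyCop_catches {c₀ : V} (rs : RobberStrategy G) :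
    ∀ (n k : ℕ),
      CopWinsWithin G n (play G (greedyCop G c₀) rs k).1 (play G (greedyCop G c₀) rs k).2 →
      ∃ j, (play G (greedyCop G c₀) rs (j + 1)).1 = (play G (greedyCop G c₀) rs j).2
  | 0, _, h => h.elim
  | n + 1, k, h => (greedyMove_spec G h).elim (fun hcap => ⟨k, hcap⟩)
      fun hall => greedyCop_catches rs n (k + 1) (hall _ (rs.move_mem _ _))

lemma copWin_of_forall_copWinsWithin (c₀ : V) (h : ∀ r₀, ∃ n, CopWinsWithin G n c₀ r₀) :
    CopWin G :=
  ⟨greedyCop G c₀, fun rs =>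
    let ⟨n, hn⟩ := h (rs.init c₀)
    greedyCop_catches G rs n 0 hn⟩

lemma exists_evasion [Finite V] {c r c' : V} (hlost : ¬∃ n, CopWinsWithin G n c r)
    (hc' : c' ∈ closedNbhd G c) :
    ∃ r' ∈ closedNbhd G r, ¬∃ n, CopWinsWithin G n c' r' := by
  by_contra! hall
  choose! N hN using hall
  have := Fintype.ofFinite V
  exact hlost ⟨Finset.univ.sup N + 1, c', hc', Or.inr fun r' hr' =>
    (hN r' hr').mono (Finset.le_sup (Finset.mem_univ r'))⟩

open Classical in
noncomputable def evasiveRobber : RobberStrategy G where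
  init c := if h : ∃ r, ¬∃ n, CopWinsWithin G n c r then h.choose else c
  move c r := if h : ∃ r' ∈ closedNbhd G r, ¬∃ n, CopWinsWithin G n c r' then h.choose else r
  valid c r := by
    split_ifs with h
    · exact mem_closedNbhd.1 h.choose_spec.1
    · exact Or.inl rfl

lemma evasiveRobber_init_spec {c : V} (h : ∃ r, ¬∃ n, CopWinsWithin G n c r) :
    ¬∃ n, CopWinsWithin G n c ((evasiveRobber G).init c) := by
  dsimp only [evasiveRobber]
  rw [dif_pos h]
  exact h.choose_spec

lemma evasiveRobber_move_spec {c r : V}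
    (h : ∃ r' ∈ closedNbhd G r, ¬∃ n, CopWinsWithin G n c r') :
    ¬∃ n, CopWinsWithin G n c ((evasiveRobber G).move c r) := by
  dsimp only [evasiveRobber]
  rw [dif_pos h]
  exact h.choose_spec.2

lemma evasiveRobber_evades [Finite V] (cs : CopStrategy G) {r₀ : V}
    (h : ¬∃ n, CopWinsWithin G n cs.init r₀) (k : ℕ) :
    ¬∃ n, CopWinsWithin G n
      (play G cs (evasiveRobber G) k).1 (play G cs (evasiveRobber G) k).2 := by
  induction k with
  | zero => exact evasiveRobber_init_spec G ⟨r₀, h⟩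
  | succ k ih => exact evasiveRobber_move_spec G (exists_evasion G ih (cs.move_mem _ _))

lemma exists_forall_copWinsWithin_of_copWin [Finite V] (h : CopWin G) :
    ∃ c₀, ∀ r₀, ∃ n, CopWinsWithin G n c₀ r₀ := by
  obtain ⟨cs, hcs⟩ := h
  refine ⟨cs.init, fun r₀ => by_contra fun hr₀ => ?_⟩
  obtain ⟨k, hk⟩ := hcs (evasiveRobber G)
  have hcaught :
      (play G cs (evasiveRobber G) k).2 ∈ closedNbhd G (play G cs (evasiveRobber G) k).1 := by
    rw [← hk]
    exact cs.move_mem _ _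
  exact evasiveRobber_evades G cs hr₀ k ⟨1, CopWinsWithin.of_mem hcaught⟩

end Strategies

section Retraction

variable {S : Set V} (f : V → S)

lemma CopWinsWithin.map_retraction
    (hf : ∀ ⦃a b⦄, b ∈ closedNbhd G a → f b ∈ closedNbhd (G.induce S) (f a))
    (hfix : ∀ s : S, f s = s)
    {n : ℕ} {c : V} {r : S} (h : CopWinsWithin G n c r) :
    CopWinsWithin (G.induce S) n (f c) r := by
  induction n generalizing c r with
  | zero => exact h.elim
  | succ n ih =>
    obtain ⟨c', hc', hcap | hall⟩ := h
    · exact ⟨f c', hf hc', Or.inl (by rw [hcap, hfix])⟩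
    · exact ⟨f c', hf hc', Or.inr fun r' hr' => ih (hall r' (mem_closedNbhd_induce.1 hr'))⟩

theorem copWin_induce_of_retraction [Finite V]
    (hf : ∀ ⦃a b⦄, b ∈ closedNbhd G a → f b ∈ closedNbhd (G.induce S) (f a))
    (hfix : ∀ s : S, f s = s) (h : CopWin G) : CopWin (G.induce S) := by
  obtain ⟨c₀, hc₀⟩ := exists_forall_copWinsWithin_of_copWin G h
  exact copWin_of_forall_copWinsWithin _ (f c₀) fun r₀ =>
    (hc₀ r₀).imp fun _ => CopWinsWithin.map_retraction f hf hfix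

variable {f}

lemma map_mem_closedNbhd_induce (hdomf : ∀ w, closedNbhd G w ⊆ closedNbhd G (f w)) {a b : V}
    (hb : b ∈ closedNbhd G a) : f b ∈ closedNbhd (G.induce S) (f a) :=
  mem_closedNbhd_induce.2 <| mem_closedNbhd_comm.1 <| hdomf b <| mem_closedNbhd_comm.1 <|
    hdomf a hb

lemma CopWinsWithin.of_induce {n : ℕ} {c r : S} (h : CopWinsWithin (G.induce S) n c r)
    (hdomf : ∀ w, closedNbhd G w ⊆ closedNbhd G (f w)) (hfix : ∀ s : S, f s = s) :
    CopWinsWithin G (2 * n) c r := by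
  induction n generalizing c r with
  | zero => exact h.elim
  | succ n ih =>
    obtain ⟨c', hc', hcap | hall⟩ := h
    · exact ⟨c', mem_closedNbhd_induce.1 hc', Or.inl (congrArg _ hcap)⟩
    · refine ⟨c', mem_closedNbhd_induce.1 hc', Or.inr fun r' hr' => ?_⟩
      have hfr' : f r' ∈ closedNbhd (G.induce S) r :=
        hfix r ▸ map_mem_closedNbhd_induce hdomf hr'
      exact (ih (hall _ hfr')).of_closedNbhd_subset (hdomf r')

theorem copWin_of_copWin_induce [Finite S] (hdomf : ∀ w, closedNbhd G w ⊆ closedNbhd G (f w))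
    (hfix : ∀ s : S, f s = s) (h : CopWin (G.induce S)) : CopWin G := by
  obtain ⟨c₀, hc₀⟩ := exists_forall_copWinsWithin_of_copWin _ h
  refine copWin_of_forall_copWinsWithin G c₀ fun r₀ => ?_
  obtain ⟨n, hn⟩ := hc₀ (f r₀)
  exact ⟨2 * n + 1, (hn.of_induce hdomf hfix).of_closedNbhd_subset (hdomf r₀)⟩

theorem copWin_iff_copWin_induce_of_retraction [Finite V]
    (hdomf : ∀ w, closedNbhd G w ⊆ closedNbhd G (f w)) (hfix : ∀ s : S, f s = s) :
    CopWin G ↔ CopWin (G.induce S) :=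
  ⟨copWin_induce_of_retraction f (fun _ _ => map_mem_closedNbhd_induce hdomf) hfix,
    copWin_of_copWin_induce hdomf hfix⟩

end Retraction

section Fold

variable {u v : V}

open Classical in
noncomputable def fold (huv : u ≠ v) (w : V) : {w : V | w ≠ u} :=
  if h : w = u then ⟨v, huv.symm⟩ else ⟨w, h⟩

lemma fold_coe (huv : u ≠ v) (s : {w : V | w ≠ u}) : fold huv s = s :=
  dif_neg s.2

lemma Dominates.closedNbhd_subset_fold (hdom : Dominates G v u) (huv : u ≠ v) (w : V) :
    closedNbhd G w ⊆ closedNbhd G (fold huv w) := by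
  by_cases h : w = u
  · subst h
    rw [fold, dif_pos rfl]
    exact hdom
  · rw [fold, dif_neg h]

end Fold

end CopsAndRobbers

/-- if `v` dominates `u` in a finite graph `G`, then the cop wins `G` iff
the cop wins `G - u`. -/
theorem copWin_iff_copWin_remove_dominated {V : Type*} [Finite V] (G : SimpleGraph V)
    (u v : V) (huv : u ≠ v) (hdom : Dominates G v u) :
    CopWin G ↔ CopWin (G.induce {w | w ≠ u}) :=
  copWin_iff_copWin_induce_of_retraction (hdom.closedNbhd_subset_fold huv) (fold_coe huv)
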